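/- Let A be a cellular algebra over a field R with block decomposition A = ⊕_Γ B_Γ indexed by cell-linkage classes Γ ∈ Λ⁺/∼, and let e_Γ be the block idempotent with e_Γ A = B_Γ. Then e_Γ* = e_Γ, and B_Γ has a cellular basis {b^λ_{s,t} : s,t ∈ T(λ), λ ∈ Γ} with b^λ_{s,t} ≡ c^λ_{s,t} mod A^{∨λ} in A; moreover the union of these bases over all Γ is a cellular basis of A. -/

import Mathlib

open MulOpposite

noncomputable section

universe u

section CompFactors

variable (A : Type u) [Ring A]

/-- The `i`-th factor of a series of submodules. -/
abbrev CompSeriesFactor {M : Type u} [AddCommGroup M] [Module A M]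
    (s : CompositionSeries (Submodule A M)) (i : Fin s.length) : Type u :=
  ↥(s i.succ) ⧸ Submodule.comap (s i.succ).subtype (s i.castSucc)

open Classical in
/-- The multiplicity of `N` among the composition factors of `M` (returning `0` if `M`
has no composition series); by the Jordan–Hölder theorem this does not depend on the
choice of composition series. -/
def compMult (M : Type u) [AddCommGroup M] [Module A M]
    (N : Type u) [AddCommGroup N] [Module A N] : ℕ :=
  if h : ∃ s : CompositionSeries (Submodule A M), s.head = ⊥ ∧ s.last = ⊤ then
    (Finset.univ.filter fun i : Fin h.choose.length =>
      Nonempty (CompSeriesFactor A h.choose i ≃ₗ[A] N)).card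
  else 0

/-- `N` is (isomorphic to) a composition factor, i.e. a simple subquotient, of `M`. -/
def IsCompFactor (M N : Type u) [AddCommGroup M] [Module A M]
    [AddCommGroup N] [Module A N] : Prop :=
  ∃ p q : Submodule A M, p ≤ q ∧
    IsSimpleModule A (↥q ⧸ Submodule.comap q.subtype p) ∧
    Nonempty ((↥q ⧸ Submodule.comap q.subtype p) ≃ₗ[A] N)

/-- `M₁` and `M₂` have a common composition factor. -/
def ShareFactor (M₁ M₂ : Type u) [AddCommGroup M₁] [Module A M₁]
    [AddCommGroup M₂] [Module A M₂] : Prop :=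
  ∃ (p q : Submodule A M₁) (p' q' : Submodule A M₂), p ≤ q ∧ p' ≤ q' ∧
    IsSimpleModule A (↥q ⧸ Submodule.comap q.subtype p) ∧
    Nonempty ((↥q ⧸ Submodule.comap q.subtype p) ≃ₗ[A]
      (↥q' ⧸ Submodule.comap q'.subtype p'))

/-- `e` is a primitive central idempotent (a block idempotent) of `A`. -/
def IsPrimCentralIdem (e : A) : Prop :=
  IsIdempotentElem e ∧ e ∈ Set.center A ∧ e ≠ 0 ∧
    ∀ f g : A, IsIdempotentElem f → IsIdempotentElem g → f ∈ Set.center A →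
      g ∈ Set.center A → f * g = 0 → e = f + g → f = 0 ∨ g = 0

/-- A module belongs to the block of the central idempotent `e` when `e` acts as
the identity on it. -/
def InBlock (e : A) (M : Type u) [AddCommGroup M] [Module A M] : Prop :=
  ∀ m : M, e • m = m

/-- `P` is a projective cover of `L`. -/
def IsProjCover (P L : Type u) [AddCommGroup P] [Module A P]
    [AddCommGroup L] [Module A L] : Prop :=
  Module.Projective A P ∧ ∃ f : P →ₗ[A] L, Function.Surjective f ∧
    ∀ N : Submodule A P, N ⊔ LinearMap.ker f = ⊤ → N = ⊤

end CompFactors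

/-- The bilinear form on `ι → R` induced by a matrix `φ`. -/
def formSum {R ι : Type u} [CommRing R] [Fintype ι] (φ : ι → ι → R) (x y : ι → R) : R :=
  ∑ s, ∑ t, x s * φ s t * y t

section Cellular

variable (R A : Type u) [CommRing R] [Ring A] [Algebra R A]
variable (Λp : Type u) [PartialOrder Λp] (T : Λp → Type u) [∀ l, Fintype (T l)]

/-- A cell datum (Graham–Lehrer) for the `R`-algebra `A`: a cellular basis
`c l s t` indexed by pairs of elements of `T l` for `l` in the poset `Λp`, an
anti-automorphism `star` swapping the two indices, and structure constants
`coeff` for right multiplication, acting on the second index modulo higher terms. -/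
structure CellDatum where
  c : ∀ l, T l → T l → A
  basis : Module.Basis ((l : Λp) × (T l × T l)) R A
  basis_eq : ∀ l s t, basis ⟨l, (s, t)⟩ = c l s t
  star : A →ₗ[R] A
  star_mul : ∀ a b, star (a * b) = star b * star a
  star_c : ∀ l s t, star (c l s t) = c l t s
  coeff : ∀ l, T l → A → T l → R
  mul_rule : ∀ (l) (s t : T l) (a : A),
    c l s t * a - ∑ v, coeff l t a v • c l s v ∈
      Submodule.span R {x : A | ∃ l' s' t', l < l' ∧ x = c l' s' t'}

variable {R A Λp T}

namespace CellDatum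

variable (D : CellDatum R A Λp T)

/-- The span of the cellular basis elements with index strictly above `l`. -/
def Aup (l : Λp) : Submodule R A :=
  Submodule.span R {x : A | ∃ l' s' t', l < l' ∧ x = D.c l' s' t'}

/-- The span of the cellular basis elements with index in `P`. -/
def cellSpan (P : Set Λp) : Submodule R A :=
  Submodule.span R {x : A | ∃ l s t, l ∈ P ∧ x = D.c l s t}

/-- The data of right standard (cell) modules: each `T l → R` is a right `A`-module
(i.e. a module over `Aᵐᵒᵖ`), the action is `R`-bilinear, and on the standard basis it is
given by the structure constants of the cell datum. -/
def RightStd [∀ l, DecidableEq (T l)] [∀ l, Module Aᵐᵒᵖ (T l → R)] : Prop :=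
  (∀ (l : Λp) (r : R) (a : Aᵐᵒᵖ) (x : T l → R), a • (r • x) = r • (a • x)) ∧
  (∀ (l : Λp) (t : T l) (a : A),
    (op a) • (Pi.single t 1 : T l → R) = fun v => D.coeff l t a v)

/-- The data of left standard (cell) modules. -/
def LeftStd [∀ l, DecidableEq (T l)] [∀ l, Module A (T l → R)] : Prop :=
  (∀ (l : Λp) (r : R) (a : A) (x : T l → R), a • (r • x) = r • (a • x)) ∧
  (∀ (l : Λp) (t : T l) (a : A),
    a • (Pi.single t 1 : T l → R) = fun v => D.coeff l t (D.star a) v)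

/-- `φ` is the matrix of the canonical bilinear form on the standard modules:
`c l u s * c l t v ≡ φ l s t • c l u v` modulo `A^{∨l}`. -/
def FormData (φ : ∀ l, T l → T l → R) : Prop :=
  ∀ (l : Λp) (s t u v : T l), D.c l u s * D.c l t v - φ l s t • D.c l u v ∈ D.Aup l

section Idem

variable {Λt M X : Type u} [PartialOrder Λt] [PartialOrder X] [Fintype M]

/-- Assumptions (A1)–(A4): `ι : Λp → Λt` realizes the cell poset inside the
bigger poset `Λt`, `κ : M → Λt` realizes the index set of the orthogonal idempotent
decomposition `1 = ∑ e μ`, each `e μ` lies in the span of the `c l s t` with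
`ι l ≥ κ μ`, and every column of the cellular basis is fixed by some `e μ`. -/
structure IdemData (ι : Λp → Λt) (κ : M → Λt) (e : M → A) : Prop where
  order_iff : ∀ l l', ι l ≤ ι l' ↔ l ≤ l'
  kappa_inj : Function.Injective κ
  ne_zero : ∀ μ, e μ ≠ 0
  idem : ∀ μ, e μ * e μ = e μ
  orth : ∀ μ ν, μ ≠ ν → e μ * e ν = 0
  sum_one : ∑ μ, e μ = 1
  mem_span : ∀ μ, e μ ∈ Submodule.span R {x : A | ∃ l s t, κ μ ≤ ι l ∧ x = D.c l s t}
  exists_idem : ∀ (l) (t : T l), ∃ μ, (∀ s, D.c l s t * e μ = D.c l s t) ∧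
    (∀ u, e μ * D.c l t u = D.c l t u)

/-- `T(λ,μ)`: the indices `t` whose column (resp. row) of the cellular basis is fixed
by right (resp. left) multiplication by `e μ`. -/
def Tset (e : M → A) (l : Λp) (μ : M) : Set (T l) :=
  {t | (∀ s, D.c l s t * e μ = D.c l s t) ∧ (∀ u, e μ * D.c l t u = D.c l t u)}

/-- `T⁺_α(λ)`. -/
def Tplus (e : M → A) (ι : Λp → Λt) (κ : M → Λt) (α : Λt → X) (l : Λp) : Set (T l) :=
  {t | ∃ μ, t ∈ D.Tset e l μ ∧ α (ι l) = α (κ μ)}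

/-- `T⁻_α(λ)`. -/
def Tminus (e : M → A) (ι : Λp → Λt) (κ : M → Λt) (α : Λt → X) (l : Λp) : Set (T l) :=
  {t | ∃ μ, t ∈ D.Tset e l μ ∧ α (κ μ) < α (ι l)}

/-- `I(λ,ε)`: `T⁺_α(λ)` for `ε = false` and `T⁻_α(λ)` for `ε = true`. -/
def Iset (e : M → A) (ι : Λp → Λt) (κ : M → Λt) (α : Λt → X) (l : Λp) : Bool → Set (T l)
  | false => D.Tplus e ι κ α l
  | true => D.Tminus e ι κ α l

/-- `J̃(λ,ε)`: `T⁺_α(λ)` for `ε = false` and all of `T(λ)` for `ε = true`. -/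
def Jset (e : M → A) (ι : Λp → Λt) (κ : M → Λt) (α : Λt → X) (l : Λp) : Bool → Set (T l)
  | false => D.Tplus e ι κ α l
  | true => Set.univ

/-- The Levi type subalgebra `A^α` (as a submodule). -/
def levi (e : M → A) (ι : Λp → Λt) (κ : M → Λt) (α : Λt → X) : Submodule R A :=
  Submodule.span R {x : A | ∃ l ε s t, s ∈ D.Iset e ι κ α l ε ∧ t ∈ D.Iset e ι κ α l ε ∧
    x = D.c l s t}

/-- The parabolic type subalgebra `Ã^α` (as a submodule). -/
def parab (e : M → A) (ι : Λp → Λt) (κ : M → Λt) (α : Λt → X) : Submodule R A :=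
  Submodule.span R {x : A | ∃ l ε s t, s ∈ D.Iset e ι κ α l ε ∧ t ∈ D.Jset e ι κ α l ε ∧
    x = D.c l s t}

/-- The span of the elements of the cellular basis of `A^α` of index strictly
above `(l,ε)` in `Ω`. -/
def upperOm (e : M → A) (ι : Λp → Λt) (κ : M → Λt) (α : Λt → X) (p : Λp × Bool) :
    Submodule R A :=
  Submodule.span R {x : A | ∃ (q : Λp × Bool) (s t : T q.1),
    ((p.2 < q.2) ∨ (p.2 = q.2 ∧ p.1 < q.1)) ∧
    s ∈ D.Iset e ι κ α q.1 q.2 ∧ t ∈ D.Iset e ι κ α q.1 q.2 ∧ x = D.c q.1 s t}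

/-- The span of the elements of the standard basis of `Ã^α` of index strictly
above `(l,ε)` in `Ω`. -/
def upperOmParab (e : M → A) (ι : Λp → Λt) (κ : M → Λt) (α : Λt → X) (p : Λp × Bool) :
    Submodule R A :=
  Submodule.span R {x : A | ∃ (q : Λp × Bool) (s t : T q.1),
    ((p.2 < q.2) ∨ (p.2 = q.2 ∧ p.1 < q.1)) ∧
    s ∈ D.Iset e ι κ α q.1 q.2 ∧ t ∈ D.Jset e ι κ α q.1 q.2 ∧ x = D.c q.1 s t}

end Idem

end CellDatum

end Cellular

/-! The block idempotent `e = e_{[λ]}` acts as the identity on `W^λ`, which by the cellular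
multiplication rule means `c^λ_{s,t} e ≡ c^λ_{s,t}` modulo `A^{∨λ}`. As `*` is an
anti-involution, `e*` is again a primitive central idempotent; were it different from `e`,
the two would be orthogonal, so `e*` would kill `W^λ`, giving `c^λ_{t,s} e* ∈ A^{∨λ}` and,
after applying `*`, the absurd `c^λ_{s,t} ∈ A^{∨λ}`. The new basis is
`b^λ_{s,t} = e_{[λ]} c^λ_{s,t}`: it is unitriangular with respect to `c`, hence again a basis,
and the cellular axioms pass through multiplication by the central idempotents. -/

section PrimCentralIdem

variable {A : Type u} [Ring A]

theorem IsPrimCentralIdem.mul_eq_zero_or_mul_eq_self {x y : A} (hx : IsPrimCentralIdem A x)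
    (hy : IsIdempotentElem y) (hyc : y ∈ Set.center A) : x * y = 0 ∨ x * y = x := by
  obtain ⟨hxi, hxc, -, hprim⟩ := hx
  have hcomm : ∀ z ∈ Set.center A, Commute x z := fun z hz => Semigroup.mem_center_iff.mp hz x
  have hyc' : 1 - y ∈ Set.center A :=
    sub_eq_add_neg (1 : A) y ▸ Set.add_mem_center Set.one_mem_center (Set.neg_mem_center hyc)
  have horth : x * y * (x * (1 - y)) = 0 := by
    rw [(hcomm y hyc).symm.mul_mul_mul_comm, hy.mul_one_sub_self, mul_zero]
  rcases hprim (x * y) (x * (1 - y)) (hxi.mul_of_commute (hcomm y hyc) hy)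
      (hxi.mul_of_commute (hcomm _ hyc') hy.one_sub) (Set.mul_mem_center hxc hyc)
      (Set.mul_mem_center hxc hyc') horth (by rw [mul_sub, mul_one, add_sub_cancel]) with h | h
  · exact Or.inl h
  · rw [mul_sub, mul_one, sub_eq_zero] at h
    exact Or.inr h.symm

theorem IsPrimCentralIdem.mul_eq_zero_of_ne {x y : A} (hx : IsPrimCentralIdem A x)
    (hy : IsPrimCentralIdem A y) (hne : x ≠ y) : x * y = 0 := by
  have hcomm : Commute x y := Semigroup.mem_center_iff.mp hy.2.1 x
  rcases hx.mul_eq_zero_or_mul_eq_self hy.1 hy.2.1 with h | hxy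
  · exact h
  rcases hy.mul_eq_zero_or_mul_eq_self hx.1 hx.2.1 with h | hyx
  · rw [hcomm.eq, h]
  · exact absurd (hxy.symm.trans (hcomm.eq.trans hyx)) hne

theorem IsPrimCentralIdem.map_of_involutive_antihom {F : Type*} [FunLike F A A]
    [AddMonoidHomClass F A A] (σ : F) (hmul : ∀ a b, σ (a * b) = σ b * σ a)
    (hinv : Function.Involutive σ) {e : A} (he : IsPrimCentralIdem A e) :
    IsPrimCentralIdem A (σ e) := by
  have hcen : ∀ z ∈ Set.center A, σ z ∈ Set.center A := fun z hz =>
    Semigroup.mem_center_iff.mpr fun g => calc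
      g * σ z = σ (z * σ g) := by rw [hmul, hinv]
      _ = σ (σ g * z) := by rw [Semigroup.mem_center_iff.mp hz]
      _ = σ z * g := by rw [hmul, hinv]
  have hidem : ∀ p, IsIdempotentElem p → IsIdempotentElem (σ p) := fun p hp => by
    rw [IsIdempotentElem, ← hmul, hp.eq]
  have hzero : ∀ p, σ p = 0 → p = 0 := fun p hp => by rw [← hinv p, hp, map_zero]
  refine ⟨hidem e he.1, hcen e he.2.1, fun h => he.2.2.1 (hzero e h),
    fun p q hp hq hpc hqc hpq hsum => ?_⟩
  refine (he.2.2.2 (σ p) (σ q) (hidem p hp) (hidem q hq) (hcen p hpc) (hcen q hqc) ?_ ?_).imp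
    (hzero p) (hzero q)
  · rw [← hmul, ← Semigroup.mem_center_iff.mp hqc p, hpq, map_zero]
  · rw [← map_add, ← hsum, hinv]

end PrimCentralIdem

namespace CellDatum

variable {R A Λp : Type u} [CommRing R] [Ring A] [Algebra R A] [PartialOrder Λp]
  {T : Λp → Type u} [∀ l, Fintype (T l)] (D : CellDatum R A Λp T)

theorem star_star (a : A) : D.star (D.star a) = a := by
  have h : D.star ∘ₗ D.star = LinearMap.id :=
    D.basis.ext fun ⟨l, s, t⟩ => by simp [D.basis_eq, D.star_c]
  exact LinearMap.congr_fun h a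

theorem star_mem_Aup {l : Λp} {x : A} (hx : x ∈ D.Aup l) : D.star x ∈ D.Aup l := by
  have hle : D.Aup l ≤ (D.Aup l).comap D.star := Submodule.span_le.mpr <| by
    rintro _ ⟨l', s', t', hl, rfl⟩
    show D.star (D.c l' s' t') ∈ D.Aup l
    rw [D.star_c]
    exact Submodule.subset_span ⟨l', t', s', hl, rfl⟩
  exact hle hx

theorem Aup_anti {l l' : Λp} (h : l < l') : D.Aup l' ≤ D.Aup l :=
  Submodule.span_mono <| by
    rintro _ ⟨m, s, t, hm, rfl⟩
    exact ⟨m, s, t, h.trans hm, rfl⟩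

theorem mul_mem_Aup {l : Λp} {x : A} (hx : x ∈ D.Aup l) (a : A) : x * a ∈ D.Aup l := by
  have hle : D.Aup l ≤ (D.Aup l).comap (LinearMap.mulRight R a) := Submodule.span_le.mpr <| by
    rintro _ ⟨l', s', t', hl, rfl⟩
    show D.c l' s' t' * a ∈ D.Aup l
    have hsum : ∑ v, D.coeff l' t' a v • D.c l' s' v ∈ D.Aup l :=
      sum_mem fun v _ => Submodule.smul_mem _ _ (Submodule.subset_span ⟨l', s', v, hl, rfl⟩)
    simpa using add_mem (D.Aup_anti hl (D.mul_rule l' s' t' a)) hsum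
  exact hle hx

theorem c_notMem_Aup [Nontrivial R] (l : Λp) (s t : T l) : D.c l s t ∉ D.Aup l := by
  have hle : D.Aup l ≤ Submodule.span R (D.basis '' {p | l < p.1}) :=
    Submodule.span_mono <| by
      rintro _ ⟨l', s', t', hl, rfl⟩
      exact ⟨⟨l', s', t'⟩, hl, D.basis_eq l' s' t'⟩
  rw [← D.basis_eq]
  exact fun h => D.basis.linearIndependent.notMem_span_image (lt_irrefl l) (hle h)

theorem mul_rule_mul_left_of_mem_center {e : A} (he : e ∈ Set.center A) (l : Λp) (s t : T l)
    (a : A) : e * D.c l s t * a - ∑ v, D.coeff l t a v • (e * D.c l s v) ∈ D.Aup l := by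
  have h : e * D.c l s t * a - ∑ v, D.coeff l t a v • (e * D.c l s v) =
      e * (D.c l s t * a - ∑ v, D.coeff l t a v • D.c l s v) := by
    simp only [mul_sub, mul_assoc, Finset.mul_sum, mul_smul_comm]
  rw [h, ← Semigroup.mem_center_iff.mp he]
  exact D.mul_mem_Aup (D.mul_rule l s t a) e

section RightStd

variable [∀ l, DecidableEq (T l)] [∀ l, Module Aᵐᵒᵖ (T l → R)]

theorem c_mul_mem_Aup_of_smul_eq_zero (hR : D.RightStd) {l : Λp} {a : A}
    (ha : ∀ x : T l → R, op a • x = 0) (s t : T l) : D.c l s t * a ∈ D.Aup l := by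
  have hco : D.coeff l t a = 0 := (hR.2 l t a).symm.trans (ha _)
  have h : _ ∈ D.Aup l := D.mul_rule l s t a
  simpa [hco] using h

theorem c_mul_sub_mem_Aup_of_smul_eq_self (hR : D.RightStd) {l : Λp} {a : A}
    (ha : ∀ x : T l → R, op a • x = x) (s t : T l) : D.c l s t * a - D.c l s t ∈ D.Aup l := by
  have hco : D.coeff l t a = Pi.single t 1 := (hR.2 l t a).symm.trans (ha _)
  have h : _ ∈ D.Aup l := D.mul_rule l s t a
  simpa [hco, Pi.single_apply, ite_smul] using h

theorem star_eq_self_of_smul_eq_self [Nontrivial R] (hR : D.RightStd) {l : Λp} [Nonempty (T l)]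
    {e : A} (he : IsPrimCentralIdem A e) (hl : ∀ x : T l → R, op e • x = x) :
    D.star e = e := by
  by_contra hne
  have hstar : IsPrimCentralIdem A (D.star e) :=
    he.map_of_involutive_antihom D.star D.star_mul D.star_star
  have horth : e * D.star e = 0 := he.mul_eq_zero_of_ne hstar (Ne.symm hne)
  have hkill : ∀ x : T l → R, op (D.star e) • x = 0 := fun x => by
    rw [← hl x, smul_smul, ← op_mul, horth, op_zero, zero_smul]
  obtain ⟨s⟩ := ‹Nonempty (T l)›
  have h₁ : e * D.c l s s ∈ D.Aup l := by
    simpa [D.star_mul, D.star_c, D.star_star] using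
      D.star_mem_Aup (D.c_mul_mem_Aup_of_smul_eq_zero hR hkill s s)
  have h₂ := D.c_mul_sub_mem_Aup_of_smul_eq_self hR hl s s
  rw [← Semigroup.mem_center_iff.mp he.2.1] at h₁
  exact D.c_notMem_Aup l s s (by simpa using sub_mem h₁ h₂)

end RightStd

section Unitriangular

variable {D} {b : ∀ l, T l → T l → A}

theorem Aup_le_span_of_sub_mem [WellFoundedGT Λp]
    (hb : ∀ l s t, b l s t - D.c l s t ∈ D.Aup l) (l : Λp) :
    D.Aup l ≤ Submodule.span R {x | ∃ l' s' t', l < l' ∧ x = b l' s' t'} := by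
  induction l using WellFoundedGT.induction with
  | _ l ih =>
  refine Submodule.span_le.mpr ?_
  rintro _ ⟨l', s', t', hl, rfl⟩
  have hup : D.Aup l' ≤ Submodule.span R {x | ∃ l'' s'' t'', l < l'' ∧ x = b l'' s'' t''} :=
    (ih l' hl).trans <| Submodule.span_mono <| by
      rintro _ ⟨m, s, t, hm, rfl⟩
      exact ⟨m, s, t, hl.trans hm, rfl⟩
  have hb' : b l' s' t' ∈ Submodule.span R {x | ∃ l'' s'' t'', l < l'' ∧ x = b l'' s'' t''} :=
    Submodule.subset_span ⟨l', s', t', hl, rfl⟩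
  simpa using sub_mem hb' (hup (hb l' s' t'))

theorem span_range_eq_top_of_sub_mem [WellFoundedGT Λp]
    (hb : ∀ l s t, b l s t - D.c l s t ∈ D.Aup l) :
    Submodule.span R (Set.range fun p : (l : Λp) × (T l × T l) => b p.1 p.2.1 p.2.2) = ⊤ := by
  refine eq_top_iff.mpr (D.basis.span_eq ▸ Submodule.span_le.mpr ?_)
  rintro _ ⟨⟨l, s, t⟩, rfl⟩
  have hup : D.Aup l ≤ Submodule.span R
      (Set.range fun p : (l : Λp) × (T l × T l) => b p.1 p.2.1 p.2.2) :=
    (Aup_le_span_of_sub_mem hb l).trans <| Submodule.span_mono <| by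
      rintro _ ⟨m, s, t, -, rfl⟩
      exact ⟨⟨m, s, t⟩, rfl⟩
  rw [SetLike.mem_coe, D.basis_eq]
  have hb' : b l s t ∈ Submodule.span R
      (Set.range fun p : (l : Λp) × (T l × T l) => b p.1 p.2.1 p.2.2) :=
    Submodule.subset_span ⟨⟨l, s, t⟩, rfl⟩
  simpa using sub_mem hb' (hup (hb l s t))

theorem exists_basis_of_sub_mem [Nontrivial R] [Fintype Λp]
    (hb : ∀ l s t, b l s t - D.c l s t ∈ D.Aup l) :
    ∃ bb : Module.Basis ((l : Λp) × (T l × T l)) R A,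
      ∀ p : (l : Λp) × (T l × T l), bb p = b p.1 p.2.1 p.2.2 := by
  have : Module.Finite R A := Module.Finite.of_basis D.basis
  have hspan := (span_range_eq_top_of_sub_mem hb).ge
  have hcard := (Module.finrank_eq_card_basis D.basis).symm
  exact ⟨basisOfTopLeSpanOfCardEqFinrank _ hspan hcard,
    congrFun (coe_basisOfTopLeSpanOfCardEqFinrank _ hspan hcard)⟩

end Unitriangular

theorem mem_span_of_mul_eq_self {ι : Type*} {e : ι → A} {κ : Λp → ι}
    (hidem : ∀ i, IsIdempotentElem (e i)) (horth : ∀ i j, i ≠ j → e i * e j = 0)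
    (htop : Submodule.span R (Set.range fun p : (l : Λp) × (T l × T l) =>
      e (κ p.1) * D.c p.1 p.2.1 p.2.2) = ⊤) {i : ι} {x : A} (hx : e i * x = x) :
    x ∈ Submodule.span R {y | ∃ l s t, κ l = i ∧ y = e (κ l) * D.c l s t} := by
  set B := Submodule.span R {y | ∃ l s t, κ l = i ∧ y = e (κ l) * D.c l s t}
  have hle : ⊤ ≤ B.comap (LinearMap.mulLeft R (e i)) := htop ▸ Submodule.span_le.mpr <| by
    rintro _ ⟨⟨l, s, t⟩, rfl⟩
    show e i * (e (κ l) * D.c l s t) ∈ B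
    rw [← mul_assoc]
    by_cases hl : κ l = i
    · subst hl
      rw [(hidem _).eq]
      exact Submodule.subset_span ⟨l, s, t, rfl, rfl⟩
    · rw [horth i (κ l) (Ne.symm hl), zero_mul]
      exact zero_mem B
  rw [← hx]
  exact hle Submodule.mem_top

end CellDatum

theorem stmt_4_general
    {R A : Type u} [Field R] [Ring A] [Algebra R A]
    {Λp : Type u} [PartialOrder Λp] [Fintype Λp]
    {T : Λp → Type u} [∀ l, Fintype (T l)] [∀ l, Nonempty (T l)] [∀ l, DecidableEq (T l)]
    (D : CellDatum R A Λp T)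
    [∀ l, Module Aᵐᵒᵖ (T l → R)] (hRStd : D.RightStd)
    -- the block idempotents, indexed by the cell-linkage classes
    (f : Quot (fun l m : Λp => ShareFactor Aᵐᵒᵖ (T l → R) (T m → R)) → A)
    (hf : ∀ Γ, IsPrimCentralIdem A (f Γ))
    (hfinj : Function.Injective f)
    (hfblock : ∀ l : Λp, InBlock Aᵐᵒᵖ (op (f (Quot.mk _ l))) (T l → R)) :
    (∀ Γ, D.star (f Γ) = f Γ) ∧
    ∃ b : ∀ l, T l → T l → A,
      (∀ (l) (s t : T l), b l s t - D.c l s t ∈ D.Aup l) ∧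
      (∀ (l) (s t : T l), f (Quot.mk _ l) * b l s t = b l s t) ∧
      (∀ (l) (s t : T l), D.star (b l s t) = b l t s) ∧
      (∃ bb : Module.Basis ((l : Λp) × (T l × T l)) R A,
        ∀ p : (l : Λp) × (T l × T l), bb p = b p.1 p.2.1 p.2.2) ∧
      (∀ (l) (t : T l) (a : A), ∃ r : T l → R, ∀ s,
        b l s t * a - ∑ v, r v • b l s v ∈
          Submodule.span R {x : A | ∃ l' s' t', l < l' ∧ x = b l' s' t'}) ∧
      (∀ Γ (x : A), f Γ * x = x →
        x ∈ Submodule.span R {y : A | ∃ l s t, Quot.mk _ l = Γ ∧ y = b l s t}) := by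
  have hcomm : ∀ Γ a, a * f Γ = f Γ * a := fun Γ => Semigroup.mem_center_iff.mp (hf Γ).2.1
  have hstar : ∀ Γ, D.star (f Γ) = f Γ := by
    rintro ⟨l⟩
    exact D.star_eq_self_of_smul_eq_self hRStd (hf _) (hfblock l)
  have hb : ∀ l s t, f (Quot.mk _ l) * D.c l s t - D.c l s t ∈ D.Aup l := fun l s t =>
    hcomm _ _ ▸ D.c_mul_sub_mem_Aup_of_smul_eq_self hRStd (hfblock l) s t
  refine ⟨hstar, _, hb, fun l s t => by rw [← mul_assoc, (hf _).1.eq],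
    fun l s t => by rw [D.star_mul, D.star_c, hstar, hcomm], CellDatum.exists_basis_of_sub_mem hb,
    fun l t a => ⟨D.coeff l t a, fun s => CellDatum.Aup_le_span_of_sub_mem hb l
      (D.mul_rule_mul_left_of_mem_center (hf _).2.1 l s t a)⟩,
    fun Γ x => D.mem_span_of_mul_eq_self (fun Γ => (hf Γ).1)
      (fun Γ Γ' h => (hf Γ).mul_eq_zero_of_ne (hf Γ') (hfinj.ne h))
      (CellDatum.span_range_eq_top_of_sub_mem hb)⟩

/-- for the block decomposition `A = ⊕_Γ B_Γ` indexed by the cell-linkage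
classes (with block idempotents `e_Γ = f Γ`), each block idempotent is `*`-invariant,
and there is a new cellular basis `b` of `A`, congruent to `c` modulo higher terms,
compatible with the block decomposition: `b l s t ∈ B_{⟦l⟧}`, the `b`'s form a basis of
`A`, are `*`-stable, satisfy the cellular multiplication rule, and the `b`'s belonging
to a block `Γ` span that block. -/
theorem stmt_4
    {R A : Type u} [Field R] [Ring A] [Algebra R A]
    {Λp : Type u} [PartialOrder Λp] [Fintype Λp]
    {T : Λp → Type u} [∀ l, Fintype (T l)] [∀ l, Nonempty (T l)] [∀ l, DecidableEq (T l)]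
    (D : CellDatum R A Λp T)
    [∀ l, Module Aᵐᵒᵖ (T l → R)] (hRStd : D.RightStd)
    (φ : ∀ l, T l → T l → R) (hφ : D.FormData φ)
    -- the block idempotents, indexed by the cell-linkage classes
    (f : Quot (fun l m : Λp => ShareFactor Aᵐᵒᵖ (T l → R) (T m → R)) → A)
    (hf : ∀ Γ, IsPrimCentralIdem A (f Γ))
    (hfinj : Function.Injective f)
    (hfsurj : ∀ e : A, IsPrimCentralIdem A e → ∃ Γ, f Γ = e)
    (hfblock : ∀ l : Λp, InBlock Aᵐᵒᵖ (op (f (Quot.mk _ l))) (T l → R)) :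
    (∀ Γ, D.star (f Γ) = f Γ) ∧
    ∃ b : ∀ l, T l → T l → A,
      (∀ (l) (s t : T l), b l s t - D.c l s t ∈ D.Aup l) ∧
      (∀ (l) (s t : T l), f (Quot.mk _ l) * b l s t = b l s t) ∧
      (∀ (l) (s t : T l), D.star (b l s t) = b l t s) ∧
      (∃ bb : Module.Basis ((l : Λp) × (T l × T l)) R A,
        ∀ p : (l : Λp) × (T l × T l), bb p = b p.1 p.2.1 p.2.2) ∧
      (∀ (l) (t : T l) (a : A), ∃ r : T l → R, ∀ s,
        b l s t * a - ∑ v, r v • b l s v ∈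
          Submodule.span R {x : A | ∃ l' s' t', l < l' ∧ x = b l' s' t'}) ∧
      (∀ Γ (x : A), f Γ * x = x →
        x ∈ Submodule.span R {y : A | ∃ l s t, Quot.mk _ l = Γ ∧ y = b l s t}) :=
  stmt_4_general D hRStd f hf hfinj hfblock
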